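/- Let f be convex, β-smooth on S_n with unique rank-one optimizer X* satisfying quadratic growth ‖X − X*‖_F² ≤ (2/δ)(f(X) − f*). Then for any X ∈ S_n and any η ∈ [0,1], letting v = argmin_{‖u‖=1} [⟨uuᵀ, ∇f(X)⟩ + (ηβ/2)‖uuᵀ − X‖_F²] and X⁺ = (1−η)X + η vvᵀ, it holds that f(X⁺) − f* ≤ (f(X) − f*)(1 − η + η²β/δ). -/

import Mathlib

/-!
Smoothness bounds `f(X⁺)` by the regularized linear model at `X` evaluated at `vvᵀ`. Since `vvᵀ`
minimizes that model over rank-one matrices, the optimizer `X* = x*x*ᵀ` may replace it. The linear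
part is then controlled by convexity, `⟨∇f(X), X* − X⟩ ≤ f* − f(X)`, and the quadratic part by
quadratic growth, `‖X* − X‖² ≤ (2/δ)(f(X) − f*)`.
-/

open Matrix
open scoped RealInnerProductSpace

noncomputable section

/-- Trace (Frobenius) inner product on real square matrices. -/
def tinner {n : ℕ} (A B : Matrix (Fin n) (Fin n) ℝ) : ℝ := ∑ i, ∑ j, A i j * B i j

/-- Squared Frobenius norm. -/
def frobSq {n : ℕ} (A : Matrix (Fin n) (Fin n) ℝ) : ℝ := ∑ i, ∑ j, (A i j)^2

/-- Frobenius norm. -/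
def frobNorm {n : ℕ} (A : Matrix (Fin n) (Fin n) ℝ) : ℝ := Real.sqrt (frobSq A)

/-- The spectrahedron: positive semidefinite matrices with unit trace. -/
def Spectra (n : ℕ) : Set (Matrix (Fin n) (Fin n) ℝ) :=
  {X | X.PosSemidef ∧ X.trace = 1}

/-- Eigenvalues of a symmetric matrix sorted in non-decreasing order, so that
`sortedEigs hA 0` is the smallest eigenvalue (λ_n in the paper's non-increasing
convention), `sortedEigs hA 1` is the second smallest (λ_{n-1}), and in general
`sortedEigs hA i = λ_{n-i}`. -/
def sortedEigs {n : ℕ} {A : Matrix (Fin n) (Fin n) ℝ} (hA : A.IsHermitian) : Fin n → ℝ :=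
  hA.eigenvalues ∘ Tuple.sort hA.eigenvalues

namespace Matrix

variable {n : ℕ}

lemma tinner_comm (A B : Matrix (Fin n) (Fin n) ℝ) : tinner A B = tinner B A := by
  simp only [tinner, mul_comm]

lemma tinner_sub_right (A B C : Matrix (Fin n) (Fin n) ℝ) :
    tinner A (B - C) = tinner A B - tinner A C := by
  simp only [tinner, sub_apply, mul_sub, Finset.sum_sub_distrib]

lemma tinner_smul_right (c : ℝ) (A B : Matrix (Fin n) (Fin n) ℝ) :
    tinner A (c • B) = c * tinner A B := by
  simp only [tinner, smul_apply, smul_eq_mul, Finset.mul_sum, mul_left_comm]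

lemma frobSq_smul (c : ℝ) (A : Matrix (Fin n) (Fin n) ℝ) : frobSq (c • A) = c ^ 2 * frobSq A := by
  simp only [frobSq, smul_apply, smul_eq_mul, mul_pow, Finset.mul_sum]

lemma frobSq_sub_comm (A B : Matrix (Fin n) (Fin n) ℝ) : frobSq (A - B) = frobSq (B - A) := by
  simp only [frobSq, sub_apply]
  exact Finset.sum_congr rfl fun i _ => Finset.sum_congr rfl fun j _ => by ring

end Matrix

lemma ConvexOn.le_sub_of_hasDerivAt_segment {E : Type*} [AddCommGroup E] [Module ℝ E]
    {f : E → ℝ} (hf : ConvexOn ℝ Set.univ f) {x y : E} {d : ℝ}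
    (hd : HasDerivAt (fun t : ℝ => f (x + t • (y - x))) d 0) : d ≤ f y - f x := by
  have hline : ConvexOn ℝ Set.univ (fun t : ℝ => f (x + t • (y - x))) := by
    simpa [Function.comp_def, AffineMap.lineMap_apply_module', add_comm] using
      hf.comp_affineMap (AffineMap.lineMap x y)
  simpa [slope] using hline.le_slope_of_hasDerivAt (Set.mem_univ 0) (Set.mem_univ 1) one_pos hd

lemma smooth_step_le_of_regularized_min {n : ℕ} {f : Matrix (Fin n) (Fin n) ℝ → ℝ}
    {G X V W : Matrix (Fin n) (Fin n) ℝ} {β η : ℝ} (hη : 0 ≤ η)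
    (hsmooth : ∀ Y, f Y ≤ f X + tinner G (Y - X) + β / 2 * frobSq (Y - X))
    (hmin : tinner V G + η * β / 2 * frobSq (V - X) ≤ tinner W G + η * β / 2 * frobSq (W - X)) :
    f ((1 - η) • X + η • V) ≤ f X + η * tinner G (W - X) + η ^ 2 * β / 2 * frobSq (W - X) := by
  have hstep : (1 - η) • X + η • V - X = η • (V - X) := by module
  have hY := hsmooth ((1 - η) • X + η • V)
  rw [hstep, tinner_smul_right, frobSq_smul] at hY
  have hmin' : tinner G (V - X) + η * β / 2 * frobSq (V - X) ≤
      tinner G (W - X) + η * β / 2 * frobSq (W - X) := by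
    rw [tinner_sub_right, tinner_sub_right, tinner_comm G V, tinner_comm G W]
    linarith
  nlinarith [mul_le_mul_of_nonneg_left hmin' hη]

theorem stmt9_general {n : ℕ} (f : Matrix (Fin n) (Fin n) ℝ → ℝ)
    (Gf : Matrix (Fin n) (Fin n) ℝ → Matrix (Fin n) (Fin n) ℝ)
    (β δ : ℝ) (hβ : 0 < β)
    (hconv : ConvexOn ℝ Set.univ f)
    (hdiff : ∀ X H, HasDerivAt (fun t : ℝ => f (X + t • H)) (tinner (Gf X) H) 0)
    (hsmooth : ∀ X Y, f Y ≤ f X + tinner (Gf X) (Y - X) + β / 2 * frobSq (Y - X))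
    (Xs : Matrix (Fin n) (Fin n) ℝ)
    (xs : Fin n → ℝ) (hxs : ∑ i, (xs i)^2 = 1) (hrank1 : Xs = vecMulVec xs xs)
    (hQG : ∀ X ∈ Spectra n, frobSq (X - Xs) ≤ (2 / δ) * (f X - f Xs))
    (X : Matrix (Fin n) (Fin n) ℝ) (hX : X ∈ Spectra n)
    (η : ℝ) (hη0 : 0 ≤ η)
    (v : Fin n → ℝ)
    (hvmin : ∀ u : Fin n → ℝ, (∑ i, (u i)^2 = 1) →
      tinner (vecMulVec v v) (Gf X) + η * β / 2 * frobSq (vecMulVec v v - X) ≤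
      tinner (vecMulVec u u) (Gf X) + η * β / 2 * frobSq (vecMulVec u u - X)) :
    f ((1 - η) • X + η • vecMulVec v v) - f Xs ≤ (f X - f Xs) * (1 - η + η^2 * β / δ) := by
  have hstep := smooth_step_le_of_regularized_min hη0 (hsmooth X) (hrank1 ▸ hvmin xs hxs)
  have hlin : tinner (Gf X) (Xs - X) ≤ f Xs - f X :=
    hconv.le_sub_of_hasDerivAt_segment (hdiff X (Xs - X))
  have hquad : frobSq (Xs - X) ≤ 2 / δ * (f X - f Xs) := frobSq_sub_comm Xs X ▸ hQG X hX
  have hcoef : 0 ≤ η ^ 2 * β / 2 := by positivity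
  have hlin' := mul_le_mul_of_nonneg_left hlin hη0
  have hquad' := mul_le_mul_of_nonneg_left hquad hcoef
  calc f ((1 - η) • X + η • vecMulVec v v) - f Xs
      ≤ f X + η * tinner (Gf X) (Xs - X) + η ^ 2 * β / 2 * frobSq (Xs - X) - f Xs := by linarith
    _ ≤ f X + η * (f Xs - f X) + η ^ 2 * β / 2 * (2 / δ * (f X - f Xs)) - f Xs := by linarith
    _ = (f X - f Xs) * (1 - η + η ^ 2 * β / δ) := by ring

/-- One step of regularized Frank–Wolfe with any `η ∈ [0,1]`, under quadratic
growth with constant `δ` and a rank-one optimizer, satisfies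
`f(X⁺) − f* ≤ (f(X) − f*)(1 − η + η²β/δ)`. -/
theorem stmt9 {n : ℕ} (f : Matrix (Fin n) (Fin n) ℝ → ℝ)
    (Gf : Matrix (Fin n) (Fin n) ℝ → Matrix (Fin n) (Fin n) ℝ)
    (β δ : ℝ) (hβ : 0 < β) (hδpos : 0 < δ)
    (hconv : ConvexOn ℝ Set.univ f)
    (hdiff : ∀ X H, HasDerivAt (fun t : ℝ => f (X + t • H)) (tinner (Gf X) H) 0)
    (hsmooth : ∀ X Y, f Y ≤ f X + tinner (Gf X) (Y - X) + β / 2 * frobSq (Y - X))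
    (Xs : Matrix (Fin n) (Fin n) ℝ) (hXs : Xs ∈ Spectra n)
    (hopt : ∀ X ∈ Spectra n, f Xs ≤ f X)
    (huniq : ∀ X ∈ Spectra n, f X = f Xs → X = Xs)
    (xs : Fin n → ℝ) (hxs : ∑ i, (xs i)^2 = 1) (hrank1 : Xs = vecMulVec xs xs)
    (hQG : ∀ X ∈ Spectra n, frobSq (X - Xs) ≤ (2 / δ) * (f X - f Xs))
    (X : Matrix (Fin n) (Fin n) ℝ) (hX : X ∈ Spectra n)
    (η : ℝ) (hη0 : 0 ≤ η) (hη1 : η ≤ 1)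
    (v : Fin n → ℝ) (hv : ∑ i, (v i)^2 = 1)
    (hvmin : ∀ u : Fin n → ℝ, (∑ i, (u i)^2 = 1) →
      tinner (vecMulVec v v) (Gf X) + η * β / 2 * frobSq (vecMulVec v v - X) ≤
      tinner (vecMulVec u u) (Gf X) + η * β / 2 * frobSq (vecMulVec u u - X)) :
    f ((1 - η) • X + η • vecMulVec v v) - f Xs ≤ (f X - f Xs) * (1 - η + η^2 * β / δ) :=
  stmt9_general f Gf β δ hβ hconv hdiff hsmooth Xs xs hxs hrank1 hQG X hX η hη0 v hvmin
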